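/- arXiv:1907.07276 — 2 statements merged into one kernel-verified Lean document; each statement's English description precedes it below -/
import Mathlib

section
/- Let θ : [0,∞) → [0,∞) be L-Lipschitz, and let x₁,…,xₙ, x̃₁,…,x̃ₙ ∈ ℝ^d and a₁,…,aₙ, ã₁,…,ãₙ ∈ [0,∞). For the weighted empirical measures μ = (1/n)∑ᵢ θ(aᵢ) δ_{xᵢ} and μ̃ = (1/n)∑ᵢ θ(ãᵢ) δ_{x̃ᵢ}, one has d_BL(μ, μ̃) ≤ (1/n) ∑ᵢ (L|aᵢ − ãᵢ| + θ(aᵢ)‖xᵢ − x̃ᵢ‖). -/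
/-! Each summand is handled separately: writing
`s f(x) - t f(y) = s (f(x) - f(y)) + (s - t) f(y)`, the first term is controlled by the
Lipschitz bound on `f` and the second by `‖f‖_∞ ≤ 1`, and the Lipschitz bound on `θ` turns
`|θ(aᵢ) - θ(ãᵢ)|` into `L |aᵢ - ãᵢ|`. -/

theorem LipschitzWith.abs_mul_sub_mul_le {α : Type*} [PseudoMetricSpace α] {f : α → ℝ}
    (hfl : LipschitzWith 1 f) (hfb : ∀ z, |f z| ≤ 1) (s t : ℝ) (x y : α) :
    |s * f x - t * f y| ≤ |s - t| + |s| * dist x y := by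
  have hlip : |f x - f y| ≤ dist x y := by
    simpa [Real.dist_eq] using hfl.dist_le_mul x y
  calc |s * f x - t * f y| = |s * (f x - f y) + (s - t) * f y| := by ring_nf
    _ ≤ |s| * |f x - f y| + |s - t| * |f y| := by
        rw [← abs_mul, ← abs_mul]; exact abs_add_le _ _
    _ ≤ |s| * dist x y + |s - t| * 1 := by gcongr; exact hfb y
    _ = |s - t| + |s| * dist x y := by ring

theorem dBL_weighted_empirical_general
    (d n : ℕ) (L : ℝ)
    (θ : ℝ → ℝ) (hθnn : ∀ a ∈ Set.Ici (0:ℝ), 0 ≤ θ a)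
    (hθlip : ∀ a ∈ Set.Ici (0:ℝ), ∀ b ∈ Set.Ici (0:ℝ), |θ a - θ b| ≤ L * |a - b|)
    (x x' : Fin n → EuclideanSpace ℝ (Fin d))
    (a a' : Fin n → ℝ) (ha : ∀ i, 0 ≤ a i) (ha' : ∀ i, 0 ≤ a' i)
    (f : EuclideanSpace ℝ (Fin d) → ℝ)
    (hfb : ∀ z, |f z| ≤ 1) (hfl : LipschitzWith 1 f) :
    |(1 / (n:ℝ)) * ∑ i, (θ (a i) * f (x i) - θ (a' i) * f (x' i))|
      ≤ (1 / (n:ℝ)) * ∑ i, (L * |a i - a' i| + θ (a i) * ‖x i - x' i‖) := by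
  have hterm : ∀ i, |θ (a i) * f (x i) - θ (a' i) * f (x' i)|
      ≤ L * |a i - a' i| + θ (a i) * ‖x i - x' i‖ := fun i => by
    calc _ ≤ |θ (a i) - θ (a' i)| + |θ (a i)| * dist (x i) (x' i) :=
          hfl.abs_mul_sub_mul_le hfb _ _ _ _
      _ ≤ L * |a i - a' i| + θ (a i) * ‖x i - x' i‖ := by
          rw [abs_of_nonneg (hθnn _ (ha i)), dist_eq_norm]
          gcongr
          exact hθlip _ (ha i) _ (ha' i)
  calc _ = (1 / (n:ℝ)) * |∑ i, (θ (a i) * f (x i) - θ (a' i) * f (x' i))| := by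
        rw [abs_mul, abs_of_nonneg (by positivity)]
    _ ≤ (1 / (n:ℝ)) * ∑ i, |θ (a i) * f (x i) - θ (a' i) * f (x' i)| := by
        gcongr; exact Finset.abs_sum_le_sum_abs _ _
    _ ≤ _ := by gcongr with i; exact hterm i

theorem dBL_weighted_empirical
    (d n : ℕ) (hn : 0 < n) (L : ℝ) (hL : 0 ≤ L)
    (θ : ℝ → ℝ) (hθnn : ∀ a ∈ Set.Ici (0:ℝ), 0 ≤ θ a)
    (hθlip : ∀ a ∈ Set.Ici (0:ℝ), ∀ b ∈ Set.Ici (0:ℝ), |θ a - θ b| ≤ L * |a - b|)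
    (x x' : Fin n → EuclideanSpace ℝ (Fin d))
    (a a' : Fin n → ℝ) (ha : ∀ i, 0 ≤ a i) (ha' : ∀ i, 0 ≤ a' i)
    (f : EuclideanSpace ℝ (Fin d) → ℝ)
    (hfb : ∀ z, |f z| ≤ 1) (hfl : LipschitzWith 1 f) :
    |(1 / (n:ℝ)) * ∑ i, (θ (a i) * f (x i) - θ (a' i) * f (x' i))|
      ≤ (1 / (n:ℝ)) * ∑ i, (L * |a i - a' i| + θ (a i) * ‖x i - x' i‖) :=
  dBL_weighted_empirical_general d n L θ hθnn hθlip x x' a a' ha ha' f hfb hfl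
end

section
/- The map ν ↦ (t ↦ ν_t), sending a probability measure ν on C([0,T]; ℝ^d) to its flow of time-marginals, is continuous from 𝒫(C([0,T];ℝ^d)) with the weak topology into C([0,T]; 𝒫(ℝ^d)) with the topology of uniform convergence (where 𝒫(ℝ^d) carries the bounded-Lipschitz metric). -/
open MeasureTheory

noncomputable section

/-- The path space `C([0,T]; ℝ^d)`. -/
abbrev PathSpace (d : ℕ) (T : ℝ) := C(Set.Icc (0:ℝ) T, EuclideanSpace ℝ (Fin d))

instance (d : ℕ) (T : ℝ) : MeasurableSpace (PathSpace d T) := borel _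
instance (d : ℕ) (T : ℝ) : BorelSpace (PathSpace d T) := ⟨rfl⟩

/-- The time-`t` marginal of a probability measure on path space: the pushforward
under the (continuous, hence measurable) evaluation map `x ↦ x(t)`. -/
def marginalFlow (d : ℕ) (T : ℝ) (ν : ProbabilityMeasure (PathSpace d T))
    (t : Set.Icc (0:ℝ) T) : ProbabilityMeasure (EuclideanSpace ℝ (Fin d)) :=
  ν.map (f := fun x : PathSpace d T => x t)
    (ContinuousEvalConst.continuous_eval_const t).measurable.aemeasurable

/-!
The marginal `ν_t` is the image of `ν ⊗ δ_t` under the evaluation map `(x, t) ↦ x t`, which is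
jointly continuous because `[0, T]` is compact. Products of probability measures on separable
metrizable spaces, `t ↦ δ_t`, and pushforwards along continuous maps are all weakly continuous,
so `(ν, t) ↦ ν_t` is jointly continuous.
-/

namespace MeasureTheory.ProbabilityMeasure

variable {X Y Z : Type*} [MeasurableSpace X] [MeasurableSpace Y] [MeasurableSpace Z]

lemma map_prod_diracProba (μ : ProbabilityMeasure X) (y : Y) {F : X × Y → Z}
    (hF : Measurable F) :
    (μ.prod (diracProba y)).map hF.aemeasurable
      = μ.map (f := fun x ↦ F (x, y)) (hF.comp measurable_prodMk_right).aemeasurable := by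
  apply Subtype.ext
  simp only [val_eq_to_measure, toMeasure_map, toMeasure_prod]
  rw [diracProba, coe_mk, Measure.prod_dirac, Measure.map_map hF measurable_prodMk_right]
  rfl

variable [TopologicalSpace X] [SecondCountableTopology X]
  [TopologicalSpace.PseudoMetrizableSpace X] [OpensMeasurableSpace X]
  [TopologicalSpace Y] [SecondCountableTopology Y]
  [TopologicalSpace.PseudoMetrizableSpace Y] [OpensMeasurableSpace Y]
  [TopologicalSpace Z] [BorelSpace Z]

theorem continuous_map_of_continuous_uncurry {F : X × Y → Z} (hF : Continuous F) :
    Continuous fun p : ProbabilityMeasure X × Y ↦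
      p.1.map (f := fun x ↦ F (x, p.2))
        (hF.measurable.comp measurable_prodMk_right).aemeasurable := by
  have hprod : Continuous fun p : ProbabilityMeasure X × Y ↦ p.1.prod (diracProba p.2) :=
    continuous_prod.comp (continuous_fst.prodMk (continuous_diracProba.comp continuous_snd))
  exact ((continuous_map hF).comp hprod).congr fun p ↦ map_prod_diracProba p.1 p.2 hF.measurable

end MeasureTheory.ProbabilityMeasure

theorem marginalFlow_continuous_general (d : ℕ) (T : ℝ) :
    (∀ ν : ProbabilityMeasure (PathSpace d T), Continuous (marginalFlow d T ν)) ∧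
      Continuous (Function.uncurry (marginalFlow d T)) := by
  have hjoint : Continuous (Function.uncurry (marginalFlow d T)) :=
    ProbabilityMeasure.continuous_map_of_continuous_uncurry continuous_eval
  exact ⟨fun ν ↦ hjoint.comp (Continuous.prodMk_right ν), hjoint⟩

/-- The map sending a probability measure `ν` on `C([0,T];ℝ^d)` to its flow of
time-marginals `t ↦ ν_t` is well defined with continuous flows, and is continuous
from the weak topology into `C([0,T]; 𝒫(ℝ^d))` with uniform convergence; the latter
is expressed as joint continuity in `(ν, t)` (equivalent to continuity into the
compact-open topology on `C([0,T]; 𝒫(ℝ^d))` since `[0,T]` is compact). -/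
theorem marginalFlow_continuous (d : ℕ) (T : ℝ) (hT : 0 < T) :
    (∀ ν : ProbabilityMeasure (PathSpace d T), Continuous (marginalFlow d T ν)) ∧
      Continuous (Function.uncurry (marginalFlow d T)) :=
  marginalFlow_continuous_general d T

end
end
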